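/- arXiv:2408.16557 — 3 statements merged into one kernel-verified Lean document; each statement's English description precedes it below -/
import Mathlib

section
/- Let n be even, q = e^{2πi/n}, p = -e^{πi/n}, and 0 ≤ k < l ≤ n-1 with k ≡ l (mod n/2). The ℂ-algebra B⁺ = ℂ⟨u₁,u₂⟩/(u₁² + q^{kl}u₂²) is isomorphic as a graded algebra to ℂ⟨u₁,u₂⟩/(u₁u₂ + u₂u₁), via the map sending u₁ ↦ i·p^{kl}u₁ - (i·p^{-kl}/2)u₂ and u₂ ↦ u₁ + (q^{-kl}/2)u₂, where i = √(-1). -/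
noncomputable section

/-- Generator `u i` of the free algebra `ℂ⟨u₁, u₂⟩`. -/
def u (i : Fin 2) : FreeAlgebra ℂ (Fin 2) := FreeAlgebra.ι ℂ i

/-- The relation defining `B⁺ = ℂ⟨u₁,u₂⟩/(u₁² + q^{kl}u₂²)`. -/
def relBplus (c : ℂ) (a b : FreeAlgebra ℂ (Fin 2)) : Prop :=
  a = u 0 * u 0 + c • (u 1 * u 1) ∧ b = 0

/-- The relation defining the standard algebra `ℂ⟨u₁,u₂⟩/(u₁u₂ + u₂u₁)`. -/
def relStd (a b : FreeAlgebra ℂ (Fin 2)) : Prop :=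
  a = u 0 * u 1 + u 1 * u 0 ∧ b = 0

lemma key (a : ℂ) (ha : a ≠ 0) :
    ∃ f : RingQuot (relBplus (a ^ 2)) ≃ₐ[ℂ] RingQuot relStd,
      f (RingQuot.mkAlgHom ℂ (relBplus (a ^ 2)) (u 0)) =
        (Complex.I * a) • RingQuot.mkAlgHom ℂ relStd (u 0) -
          (Complex.I * a⁻¹ / 2) • RingQuot.mkAlgHom ℂ relStd (u 1) ∧
      f (RingQuot.mkAlgHom ℂ (relBplus (a ^ 2)) (u 1)) =
        RingQuot.mkAlgHom ℂ relStd (u 0) +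
          ((a ^ 2)⁻¹ / 2) • RingQuot.mkAlgHom ℂ relStd (u 1) := by
  set X : Fin 2 → RingQuot relStd := fun i => RingQuot.mkAlgHom ℂ relStd (u i) with hX
  set Y : Fin 2 → RingQuot (relBplus (a ^ 2)) :=
    fun i => RingQuot.mkAlgHom ℂ (relBplus (a ^ 2)) (u i) with hY
  have hrel : X 0 * X 1 + X 1 * X 0 = 0 := by
    have := RingQuot.mkAlgHom_rel ℂ (show relStd (u 0 * u 1 + u 1 * u 0) 0 from ⟨rfl, rfl⟩)
    simpa [hX, map_add, map_mul] using this
  have hB : Y 0 * Y 0 + (a ^ 2) • (Y 1 * Y 1) = 0 := by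
    have := RingQuot.mkAlgHom_rel ℂ
      (show relBplus (a ^ 2) (u 0 * u 0 + (a ^ 2) • (u 1 * u 1)) 0 from ⟨rfl, rfl⟩)
    simpa [hY, map_add, map_mul, map_smul] using this
  have hxy : X 0 * X 1 = -(X 1 * X 0) := eq_neg_of_add_eq_zero_left hrel
  have hyy : Y 0 * Y 0 = -((a ^ 2) • (Y 1 * Y 1)) := eq_neg_of_add_eq_zero_left hB
  set fwd0 : FreeAlgebra ℂ (Fin 2) →ₐ[ℂ] RingQuot relStd :=
    FreeAlgebra.lift ℂ ![(Complex.I * a) • X 0 - (Complex.I * a⁻¹ / 2) • X 1,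
      X 0 + ((a ^ 2)⁻¹ / 2) • X 1] with hfwd0
  have hfwd : ∀ ⦃x y⦄, relBplus (a ^ 2) x y → fwd0 x = fwd0 y := by
    rintro x y ⟨rfl, rfl⟩
    simp only [hfwd0, u, map_add, map_mul, map_smul, map_zero, FreeAlgebra.lift_ι_apply,
      Matrix.cons_val_zero, Matrix.cons_val_one, Matrix.head_cons, Fin.mk_zero, Fin.mk_one, Fin.isValue]
    simp only [mul_add, add_mul, sub_mul, mul_sub, smul_mul_assoc, mul_smul_comm, smul_smul]
    rw [hxy]
    match_scalars <;> (try field_simp) <;> (try ring_nf) <;> (try simp [Complex.I_sq]) <;> (try ring)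
  set bwd0 : FreeAlgebra ℂ (Fin 2) →ₐ[ℂ] RingQuot (relBplus (a ^ 2)) :=
    FreeAlgebra.lift ℂ ![(-(Complex.I * a⁻¹ / 2)) • Y 0 + (1 / 2 : ℂ) • Y 1,
      (Complex.I * a) • Y 0 + (a ^ 2) • Y 1] with hbwd0
  have hbwd : ∀ ⦃x y⦄, relStd x y → bwd0 x = bwd0 y := by
    rintro x y ⟨rfl, rfl⟩
    simp only [hbwd0, u, map_add, map_mul, map_smul, map_zero, FreeAlgebra.lift_ι_apply,
      Matrix.cons_val_zero, Matrix.cons_val_one, Matrix.head_cons, Fin.mk_zero, Fin.mk_one, Fin.isValue]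
    simp only [mul_add, add_mul, sub_mul, mul_sub, smul_mul_assoc, mul_smul_comm, smul_smul]
    rw [hyy]
    match_scalars <;> (try field_simp) <;> (try ring_nf) <;> (try simp [Complex.I_sq]) <;> (try ring)
  set F := RingQuot.liftAlgHom ℂ ⟨fwd0, hfwd⟩ with hF
  set G := RingQuot.liftAlgHom ℂ ⟨bwd0, hbwd⟩ with hG
  have hFY : ∀ i, F (Y i) = fwd0 (u i) := fun i => RingQuot.liftAlgHom_mkAlgHom_apply ℂ _ _ _
  have hGX : ∀ i, G (X i) = bwd0 (u i) := fun i => RingQuot.liftAlgHom_mkAlgHom_apply ℂ _ _ _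
  have hFG : F.comp G = AlgHom.id ℂ (RingQuot relStd) := by
    apply RingQuot.ringQuot_ext'
    apply FreeAlgebra.hom_ext
    funext i
    fin_cases i <;>
    · simp only [AlgHom.comp_apply, Function.comp_apply, AlgHom.id_apply]
      show F (G (X _)) = X _
      rw [hGX]
      simp only [hbwd0, u, FreeAlgebra.lift_ι_apply, Matrix.cons_val_zero, Matrix.cons_val_one,
        Matrix.head_cons, Fin.mk_zero, Fin.mk_one, Fin.isValue, map_add, map_smul]
      rw [show (F (Y 0) : RingQuot relStd) = fwd0 (u 0) from hFY 0,
          show (F (Y 1) : RingQuot relStd) = fwd0 (u 1) from hFY 1]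
      simp only [hfwd0, u, FreeAlgebra.lift_ι_apply, Matrix.cons_val_zero, Matrix.cons_val_one,
        Matrix.head_cons, Fin.mk_zero, Fin.mk_one, Fin.isValue]
      match_scalars <;> (try field_simp) <;> (try ring_nf) <;> (try simp [Complex.I_sq]) <;> (try ring)
  have hGF : G.comp F = AlgHom.id ℂ (RingQuot (relBplus (a ^ 2))) := by
    apply RingQuot.ringQuot_ext'
    apply FreeAlgebra.hom_ext
    funext i
    fin_cases i <;>
    · simp only [AlgHom.comp_apply, Function.comp_apply, AlgHom.id_apply]
      show G (F (Y _)) = Y _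
      rw [hFY]
      simp only [hfwd0, u, FreeAlgebra.lift_ι_apply, Matrix.cons_val_zero, Matrix.cons_val_one,
        Matrix.head_cons, Fin.mk_zero, Fin.mk_one, Fin.isValue, map_add, map_sub, map_smul]
      rw [show (G (X 0) : RingQuot (relBplus (a ^ 2))) = bwd0 (u 0) from hGX 0,
          show (G (X 1) : RingQuot (relBplus (a ^ 2))) = bwd0 (u 1) from hGX 1]
      simp only [hbwd0, u, FreeAlgebra.lift_ι_apply, Matrix.cons_val_zero, Matrix.cons_val_one,
        Matrix.head_cons, Fin.mk_zero, Fin.mk_one, Fin.isValue]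
      match_scalars <;> (try field_simp) <;> (try ring_nf) <;> (try simp [Complex.I_sq]) <;> (try ring)
  refine ⟨AlgEquiv.ofAlgHom F G hFG hGF, ?_, ?_⟩
  · show F (Y 0) = _
    rw [hFY]
    simp [hfwd0, u, FreeAlgebra.lift_ι_apply, hX]
  · show F (Y 1) = _
    rw [hFY]
    simp [hfwd0, u, FreeAlgebra.lift_ι_apply, hX]

/-- For `n` even, `q = e^{2πi/n}`, `p = -e^{πi/n}` and `0 ≤ k < l ≤ n-1` with
`k ≡ l (mod n/2)`, the algebra `B⁺ = ℂ⟨u₁,u₂⟩/(u₁² + q^{kl}u₂²)` is isomorphic to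
`ℂ⟨u₁,u₂⟩/(u₁u₂ + u₂u₁)` via `u₁ ↦ i p^{kl} u₁ - (i p^{-kl}/2) u₂`,
`u₂ ↦ u₁ + (q^{-kl}/2) u₂`. -/
theorem Bplus_iso_std (n k l : ℕ) (hn : 1 < n) (heven : Even n)
    (hkl : k < l) (hl : l ≤ n - 1) (hcong : k ≡ l [MOD n / 2])
    (q p : ℂ) (hq : q = Complex.exp (2 * Real.pi * Complex.I / n))
    (hp : p = -Complex.exp (Real.pi * Complex.I / n)) :
    ∃ f : RingQuot (relBplus (q ^ (k * l))) ≃ₐ[ℂ] RingQuot relStd,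
      f (RingQuot.mkAlgHom ℂ (relBplus (q ^ (k * l))) (u 0)) =
        (Complex.I * p ^ (k * l)) • RingQuot.mkAlgHom ℂ relStd (u 0) -
          (Complex.I * p ^ (-(k * l : ℤ)) / 2) • RingQuot.mkAlgHom ℂ relStd (u 1) ∧
      f (RingQuot.mkAlgHom ℂ (relBplus (q ^ (k * l))) (u 1)) =
        RingQuot.mkAlgHom ℂ relStd (u 0) +
          (q ^ (-(k * l : ℤ)) / 2) • RingQuot.mkAlgHom ℂ relStd (u 1) := by
  have hp0 : p ≠ 0 := by
    rw [hp]; exact neg_ne_zero.mpr (Complex.exp_ne_zero _)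
  have ha : p ^ (k * l) ≠ 0 := pow_ne_zero _ hp0
  have hp2 : p ^ 2 = q := by
    rw [hp, hq, neg_sq, ← Complex.exp_nat_mul]
    congr 1
    push_cast
    ring
  have hq2 : q ^ (k * l) = (p ^ (k * l)) ^ 2 := by
    rw [← hp2, ← pow_mul, ← pow_mul, mul_comm 2]
  have hpz : p ^ (-(k * l : ℤ)) = (p ^ (k * l))⁻¹ := by
    rw [zpow_neg]
    norm_cast
  have hqz : q ^ (-(k * l : ℤ)) = ((p ^ (k * l)) ^ 2)⁻¹ := by
    rw [zpow_neg, ← hq2]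
    norm_cast
  rw [hq2, hpz, hqz]
  exact key (p ^ (k * l)) ha
end
end

section
/- Let n be even and 0 ≤ k < l ≤ n-1 with k + l ≡ 0 (mod n/2) but k + l ≢ 0 (mod n). Then k² ≡ l² (mod n) holds if and only if 4 divides n. -/
/-- For `n` even and `0 ≤ k < l ≤ n-1` with `k+l ≡ 0 (mod n/2)` but `k+l ≢ 0 (mod n)`,
one has `k² ≡ l² (mod n)` if and only if `4 ∣ n`. -/
theorem sq_congruent_iff_four_dvd (n k l : ℕ) (hn : 1 < n) (heven : Even n)
    (hkl : k < l) (hl : l ≤ n - 1) (h1 : (k + l) ≡ 0 [MOD n / 2])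
    (h2 : ¬ (k + l) ≡ 0 [MOD n]) :
    (k ^ 2 ≡ l ^ 2 [MOD n] ↔ 4 ∣ n) := by
  obtain ⟨c, hc⟩ := heven
  have hcn : n = 2 * c := by omega
  have hc0 : 0 < c := by omega
  have hn2 : n / 2 = c := by omega
  have hd : (n / 2) ∣ (k + l) := Nat.modEq_zero_iff_dvd.mp h1
  rw [hn2] at hd
  obtain ⟨m, hm⟩ := hd
  have hmodd : ¬ 2 ∣ m := by
    rintro ⟨t, ht⟩
    exact h2 (Nat.modEq_zero_iff_dvd.mpr ⟨t, by rw [hm, ht, hcn]; ring⟩)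
  have key : (k ^ 2 ≡ l ^ 2 [MOD n]) ↔ n ∣ l ^ 2 - k ^ 2 :=
    Nat.modEq_iff_dvd' (by nlinarith)
  have hfac : l ^ 2 - k ^ 2 = ((l - k) * m) * c := by
    rw [Nat.sq_sub_sq]
    have : l + k = k + l := by ring
    rw [this, hm]; ring
  rw [key, hfac, hcn]
  have hiff : 2 * c ∣ ((l - k) * m) * c ↔ 2 ∣ (l - k) * m := by
    constructor
    · rintro ⟨t, ht⟩
      refine ⟨t, ?_⟩
      have : ((l - k) * m) * c = (2 * t) * c := by rw [ht]; ring
      exact Nat.eq_of_mul_eq_mul_right hc0 this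
    · rintro ⟨t, ht⟩
      exact ⟨t, by rw [ht]; ring⟩
  rw [hiff]
  rcases Nat.even_or_odd c with hce | hco
  · obtain ⟨e, he⟩ := hce
    have hkl2 : 2 ∣ k + l := ⟨e * m, by rw [hm, he]; ring⟩
    have hlk2 : 2 ∣ l - k := by omega
    exact iff_of_true (hlk2.mul_right m) ⟨e, by omega⟩
  · obtain ⟨e, he⟩ := hco
    have hcodd : ¬ 2 ∣ c := by omega
    have hklodd : ¬ 2 ∣ k + l := by
      intro h
      rw [hm] at h
      rcases (Nat.Prime.dvd_mul Nat.prime_two).mp h with h' | h'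
      · exact hcodd h'
      · exact hmodd h'
    have hlkodd : ¬ 2 ∣ l - k := by omega
    refine iff_of_false ?_ (by omega)
    intro h
    rcases (Nat.Prime.dvd_mul Nat.prime_two).mp h with h' | h'
    · exact hlkodd h'
    · exact hmodd h'
end

section
/- Let H be a Hopf algebra over a field K and A = T(V)/(I) a quadratic algebra that is an H-module algebra with V an H-submodule and I ⊆ V ⊗ V an H-submodule. Give V* the contragredient H-action. If for all h ∈ H and all φ, ψ ∈ V* one has ∑_{(h)} (h_{(2)}·φ)(h_{(1)}·ψ) = ∑_{(h)} (h_{(1)}·φ)(h_{(2)}·ψ) in V* ⊗ V*, then the orthogonal complement I^⊥ = {f ∈ V* ⊗ V* : f(r) = 0 for all r ∈ I} is an H-submodule of V* ⊗ V*; in particular the Koszul dual A^! = T(V*)/(I^⊥) is an H-module algebra. -/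
/-!
Pairing `V* ⊗ V*` with `V ⊗ V` turns the action of `∑ h₁ ⊗ h₂` into the transpose of
`∑ S h₁ ⊗ S h₂`. The symmetry hypothesis lets one swap the two legs, and `∑ S h₂ ⊗ S h₁ = Δ(S h)`
because the antipode is an anti-coalgebra map, so it preserves `I` and hence `I^⊥` is stable.

The anti-coalgebra property comes from the convolution algebra `Hom(H, H ⊗ H)`: there
`Δ = ι₁ * ι₂` for the algebra maps `ι₁ a = a ⊗ 1`, `ι₂ a = 1 ⊗ a`, whose convolution inverses are
`ι₁ ∘ S` and `ι₂ ∘ S`; hence `Δ ∘ S = Δ⁻¹ = (ι₂ ∘ S) * (ι₁ ∘ S) = τ ∘ (S ⊗ S) ∘ Δ`.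
-/

open Coalgebra TensorProduct WithConv
open Algebra.TensorProduct (includeLeft includeRight)

namespace HopfAlgebra

variable {R A B : Type*} [CommSemiring R] [Semiring A] [HopfAlgebra R A] [Semiring B] [Algebra R B]

lemma algHom_comp_antipode_convMul (φ : A →ₐ[R] B) :
    toConv (φ.toLinearMap ∘ₗ antipode R) * toConv φ.toLinearMap = 1 := by
  have h := LinearMap.algHom_comp_convMul_distrib φ (toConv (antipode R)) (toConv LinearMap.id)
  simp only [LinearMap.antipode_mul_id, LinearMap.comp_id] at h
  ext a
  simp [← h]

variable (R A)

lemma includeLeft_convMul_includeRight :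
    toConv (includeLeft (S := R) : A →ₐ[R] A ⊗[R] A).toLinearMap *
      toConv (includeRight : A →ₐ[R] A ⊗[R] A).toLinearMap = toConv (comul (R := R) (A := A)) := by
  have h : LinearMap.mul' R (A ⊗[R] A) ∘ₗ map (includeLeft (S := R)).toLinearMap
      (includeRight : A →ₐ[R] A ⊗[R] A).toLinearMap = LinearMap.id :=
    TensorProduct.ext' fun x y => by simp
  rw [LinearMap.convMul_def, ← LinearMap.comp_assoc, h, LinearMap.id_comp]

lemma comul_comp_antipode :
    comul ∘ₗ antipode R =
      (TensorProduct.comm R A A).toLinearMap ∘ₗ map (antipode R) (antipode R) ∘ₗ comul := by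
  set ι₁ := (includeLeft (S := R) : A →ₐ[R] A ⊗[R] A).toLinearMap
  set ι₂ := (includeRight : A →ₐ[R] A ⊗[R] A).toLinearMap
  have inv_comul : toConv (ι₂ ∘ₗ antipode R) * toConv (ι₁ ∘ₗ antipode R) * toConv comul = 1 := by
    rw [← includeLeft_convMul_includeRight, mul_assoc, ← mul_assoc (toConv (ι₁ ∘ₗ _)),
      algHom_comp_antipode_convMul, one_mul, algHom_comp_antipode_convMul]
  have convMul_eq : toConv (ι₂ ∘ₗ antipode R) * toConv (ι₁ ∘ₗ antipode R) =
      toConv ((TensorProduct.comm R A A).toLinearMap ∘ₗ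
        map (antipode R) (antipode R) ∘ₗ comul) := by
    rw [LinearMap.convMul_def, ← LinearMap.comp_assoc, ← LinearMap.comp_assoc]
    congr 2
    exact TensorProduct.ext' fun x y => by simp [ι₁, ι₂]
  exact congrArg ofConv <|
    (left_inv_eq_right_inv inv_comul LinearMap.comul_right_inv).symm.trans convMul_eq

variable {R A}

lemma comul_antipode (a : A) :
    comul (antipode R a) =
      TensorProduct.comm R A A (TensorProduct.map (antipode R) (antipode R) (comul a)) :=
  LinearMap.congr_fun (comul_comp_antipode R A) a

end HopfAlgebra

namespace TensorProduct

open Module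

variable {R M N M' N' : Type*} [CommSemiring R] [AddCommMonoid M] [AddCommMonoid N]
  [AddCommMonoid M'] [AddCommMonoid N'] [Module R M] [Module R N] [Module R M'] [Module R N']

lemma dualDistrib_map_dualMap (f : M →ₗ[R] M') (g : N →ₗ[R] N')
    (φ : Dual R M' ⊗[R] Dual R N') (x : M ⊗[R] N) :
    dualDistrib R M N (map f.dualMap g.dualMap φ) x = dualDistrib R M' N' φ (map f g x) := by
  induction φ <;> induction x <;> simp_all

end TensorProduct

theorem koszul_dual_perp_stable_general (K : Type*) [Field K]
    (H : Type*) [Ring H] [HopfAlgebra K H]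
    (V : Type*) [AddCommGroup V] [Module K V]
    (ρ : H →ₐ[K] Module.End K V)
    (I : Submodule K (V ⊗[K] V))
    (actD : H → Module.Dual K V →ₗ[K] Module.Dual K V)
    (hactD : ∀ (h : H) (φ : Module.Dual K V) (v : V),
      actD h φ v = φ (ρ (HopfAlgebra.antipode (R := K) h) v))
    (hI : ∀ (h : H) (ι : Type) (s : Finset ι) (h₁ h₂ : ι → H),
      Coalgebra.comul (R := K) h = ∑ i ∈ s, h₁ i ⊗ₜ[K] h₂ i →
      ∀ r ∈ I, (∑ i ∈ s, TensorProduct.map (ρ (h₁ i)) (ρ (h₂ i))) r ∈ I)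
    (hsym : ∀ (h : H) (ι : Type) (s : Finset ι) (h₁ h₂ : ι → H),
      Coalgebra.comul (R := K) h = ∑ i ∈ s, h₁ i ⊗ₜ[K] h₂ i →
      ∀ φ ψ : Module.Dual K V,
        ∑ i ∈ s, (actD (h₂ i) φ) ⊗ₜ[K] (actD (h₁ i) ψ) =
          ∑ i ∈ s, (actD (h₁ i) φ) ⊗ₜ[K] (actD (h₂ i) ψ)) :
    ∀ f : Module.Dual K V ⊗[K] Module.Dual K V,
      (∀ r ∈ I, TensorProduct.dualDistrib K V V f r = 0) →
      ∀ (h : H) (ι : Type) (s : Finset ι) (h₁ h₂ : ι → H),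
        Coalgebra.comul (R := K) h = ∑ i ∈ s, h₁ i ⊗ₜ[K] h₂ i →
        ∀ r ∈ I,
          TensorProduct.dualDistrib K V V
            ((∑ i ∈ s, TensorProduct.map (actD (h₁ i)) (actD (h₂ i))) f) r = 0 := by
  intro f hf h ι s h₁ h₂ hcomul r hr
  have actD_eq : ∀ a, actD a = (ρ (HopfAlgebra.antipode K a)).dualMap := fun a =>
    LinearMap.ext fun φ => LinearMap.ext fun v => hactD a φ v
  have swap_legs : ∑ i ∈ s, map (actD (h₁ i)) (actD (h₂ i)) =
      ∑ i ∈ s, map (actD (h₂ i)) (actD (h₁ i)) :=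
    TensorProduct.ext' fun φ ψ => by simpa using (hsym h ι s h₁ h₂ hcomul φ ψ).symm
  have comul_antipode : Coalgebra.comul (R := K) (HopfAlgebra.antipode K h) =
      ∑ i ∈ s, HopfAlgebra.antipode K (h₂ i) ⊗ₜ HopfAlgebra.antipode K (h₁ i) := by
    simp [HopfAlgebra.comul_antipode, hcomul]
  calc dualDistrib K V V ((∑ i ∈ s, map (actD (h₁ i)) (actD (h₂ i))) f) r
      = dualDistrib K V V f ((∑ i ∈ s, map (ρ (HopfAlgebra.antipode K (h₂ i)))
          (ρ (HopfAlgebra.antipode K (h₁ i)))) r) := by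
        rw [swap_legs]
        simp [actD_eq, dualDistrib_map_dualMap]
    _ = 0 := hf _ (hI _ ι s _ _ comul_antipode r hr)

/-- Let `H` be a Hopf algebra over `K` acting on `V` via `ρ`, with `I ⊆ V ⊗ V` an
`H`-submodule (the relations of a quadratic `H`-module algebra `A = T(V)/(I)`), and
let `actD` be the contragredient action `(h·φ)(v) = φ(S(h)·v)` on `V*`. If for every
Sweedler decomposition `Δ(h) = ∑ h₁ ⊗ h₂` one has
`∑ (h₂·φ) ⊗ (h₁·ψ) = ∑ (h₁·φ) ⊗ (h₂·ψ)` in `V* ⊗ V*`, then the orthogonal complement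
`I^⊥ = {f : f(r) = 0 for all r ∈ I}` is stable under the `H`-action
`h·f = ∑ (h₁·) ⊗ (h₂·) f`; in particular the Koszul dual `A^! = T(V*)/(I^⊥)` is an
`H`-module algebra. -/
theorem koszul_dual_perp_stable (K : Type*) [Field K]
    (H : Type*) [Ring H] [HopfAlgebra K H]
    (V : Type*) [AddCommGroup V] [Module K V] [FiniteDimensional K V]
    (ρ : H →ₐ[K] Module.End K V)
    (I : Submodule K (V ⊗[K] V))
    (actD : H → Module.Dual K V →ₗ[K] Module.Dual K V)
    (hactD : ∀ (h : H) (φ : Module.Dual K V) (v : V),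
      actD h φ v = φ (ρ (HopfAlgebra.antipode (R := K) h) v))
    (hI : ∀ (h : H) (ι : Type) (s : Finset ι) (h₁ h₂ : ι → H),
      Coalgebra.comul (R := K) h = ∑ i ∈ s, h₁ i ⊗ₜ[K] h₂ i →
      ∀ r ∈ I, (∑ i ∈ s, TensorProduct.map (ρ (h₁ i)) (ρ (h₂ i))) r ∈ I)
    (hsym : ∀ (h : H) (ι : Type) (s : Finset ι) (h₁ h₂ : ι → H),
      Coalgebra.comul (R := K) h = ∑ i ∈ s, h₁ i ⊗ₜ[K] h₂ i →
      ∀ φ ψ : Module.Dual K V,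
        ∑ i ∈ s, (actD (h₂ i) φ) ⊗ₜ[K] (actD (h₁ i) ψ) =
          ∑ i ∈ s, (actD (h₁ i) φ) ⊗ₜ[K] (actD (h₂ i) ψ)) :
    ∀ f : Module.Dual K V ⊗[K] Module.Dual K V,
      (∀ r ∈ I, TensorProduct.dualDistrib K V V f r = 0) →
      ∀ (h : H) (ι : Type) (s : Finset ι) (h₁ h₂ : ι → H),
        Coalgebra.comul (R := K) h = ∑ i ∈ s, h₁ i ⊗ₜ[K] h₂ i →
        ∀ r ∈ I,
          TensorProduct.dualDistrib K V V
            ((∑ i ∈ s, TensorProduct.map (actD (h₁ i)) (actD (h₂ i))) f) r = 0 :=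
  koszul_dual_perp_stable_general K H V ρ I actD hactD hI hsym
end
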